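/- arXiv:0911.2485 — 3 statements merged into one kernel-verified Lean document; each statement's English description precedes it below -/
import Mathlib

section
/- Let N ≥ 2. If k ≥ N−1 and k ≥ m ≥ 0, then the two-variable Schur polynomial π_{k,m}(x,y) lies in the ideal of ℚ[x,y] generated by h_{N−1}(x,y) and h_N(x,y). (This is the dot conversion relation for double facets of sl(N) foams: a double facet labeled by π_{k,m} with k ≥ N−1 is zero.) -/
open MvPolynomial

/-- The complete homogeneous symmetric polynomial of degree `j` in two variables. -/
noncomputable def hpoly (j : ℕ) : MvPolynomial (Fin 2) ℚ :=
  ∑ p ∈ Finset.HasAntidiagonal.antidiagonal j, X 0 ^ p.1 * X 1 ^ p.2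

/-- The two-variable Schur polynomial `π_{k,m}(x,y) = ∑_{i=m}^k x^i y^{k+m-i}`. -/
noncomputable def pitwo (k m : ℕ) : MvPolynomial (Fin 2) ℚ :=
  ∑ i ∈ Finset.Icc m k, X 0 ^ i * X 1 ^ (k + m - i)

/-!
Writing `x, y` for the variables, `π_{k,m} = (xy)^m h_{k-m}`, and the `h_j` satisfy the
recurrence `h_{j+2} = (x + y) h_{j+1} - xy h_j`. Hence every `h_j` with `j ≥ N - 1` lies in
`I = (h_{N-1}, h_N)`, and, reading the recurrence as `xy h_j = (x + y) h_{j+1} - h_{j+2}`,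
induction on `m` shows `(xy)^m h_j ∈ I` whenever `m + j ≥ N - 1`.
-/

section TwoTermRecurrence

variable {R : Type*} [CommRing R] {I : Ideal R} {s p : R} {h : ℕ → R}

theorem mem_ideal_of_two_term_recurrence (hrec : ∀ j, h (j + 2) = s * h (j + 1) - p * h j)
    {n : ℕ} (hn : h n ∈ I) (hn' : h (n + 1) ∈ I) {j : ℕ} (hj : n ≤ j) : h j ∈ I := by
  have hpair : ∀ j, n ≤ j → h j ∈ I ∧ h (j + 1) ∈ I := by
    refine Nat.le_induction ⟨hn, hn'⟩ fun j _ ⟨hj, hj'⟩ ↦ ⟨hj', ?_⟩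
    rw [hrec]
    exact sub_mem (I.mul_mem_left _ hj') (I.mul_mem_left _ hj)
  exact (hpair j hj).1

theorem pow_mul_mem_ideal_of_two_term_recurrence
    (hrec : ∀ j, h (j + 2) = s * h (j + 1) - p * h j)
    {n : ℕ} (hn : h n ∈ I) (hn' : h (n + 1) ∈ I) (m : ℕ) {j : ℕ} (hj : n ≤ m + j) :
    p ^ m * h j ∈ I := by
  induction m generalizing j with
  | zero => simpa using mem_ideal_of_two_term_recurrence hrec hn hn' (by omega)
  | succ m ih =>
    have hstep : p ^ (m + 1) * h j = s * (p ^ m * h (j + 1)) - p ^ m * h (j + 2) := by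
      rw [hrec]; ring
    rw [hstep]
    exact sub_mem (I.mul_mem_left _ (ih (by omega))) (ih (by omega))

end TwoTermRecurrence

theorem hpoly_succ (j : ℕ) : hpoly (j + 1) = X 0 ^ (j + 1) + X 1 * hpoly j := by
  simp only [hpoly, Finset.Nat.sum_antidiagonal_succ', pow_zero, mul_one, Finset.mul_sum]
  congr 1
  refine Finset.sum_congr rfl fun q _ ↦ ?_
  ring

theorem hpoly_add_two (j : ℕ) :
    hpoly (j + 2) = (X 0 + X 1) * hpoly (j + 1) - X 0 * X 1 * hpoly j := by
  rw [hpoly_succ (j + 1), hpoly_succ j]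
  ring

theorem pitwo_eq_pow_mul_hpoly {k m : ℕ} (hkm : m ≤ k) :
    pitwo k m = (X 0 * X 1) ^ m * hpoly (k - m) := by
  obtain ⟨d, rfl⟩ := Nat.exists_eq_add_of_le hkm
  rw [pitwo, hpoly, Finset.Nat.sum_antidiagonal_eq_sum_range_succ_mk,
    ← Finset.Ico_add_one_right_eq_Icc, Finset.sum_Ico_eq_sum_range, Finset.mul_sum,
    Nat.add_sub_cancel_left]
  refine Finset.sum_congr (by congr 1; omega) fun i hi ↦ ?_
  have hexp : m + d + m - (m + i) = m + (d - i) := by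
    have := Finset.mem_range.mp hi
    omega
  rw [hexp, pow_add, pow_add, mul_pow]
  ring

/-- Dot conversion for double facets: for `N ≥ 2` and `k ≥ N−1`, `k ≥ m ≥ 0`,
the Schur polynomial `π_{k,m}` lies in the ideal `(h_{N−1}, h_N)`. -/
theorem pitwo_mem_ideal (N : ℕ) (hN : 2 ≤ N) (k m : ℕ) (hk : N - 1 ≤ k) (hkm : m ≤ k) :
    pitwo k m ∈ Ideal.span {hpoly (N - 1), hpoly N} := by
  have hlow : hpoly (N - 1) ∈ Ideal.span {hpoly (N - 1), hpoly N} :=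
    Ideal.subset_span (by simp)
  have hhigh : hpoly (N - 1 + 1) ∈ Ideal.span {hpoly (N - 1), hpoly N} := by
    rw [Nat.sub_add_cancel (by omega)]
    exact Ideal.subset_span (by simp)
  rw [pitwo_eq_pow_mul_hpoly hkm]
  exact pow_mul_mem_ideal_of_two_term_recurrence hpoly_add_two hlow hhigh m (by omega)
end

section
/- On ℚ[x₁,x₂,x₃], define Demazure operators ∂₁(f) = (f − s₁f)/(x₁−x₂) and ∂₂(f) = (f − s₂f)/(x₂−x₃), where s₁ swaps x₁,x₂ and s₂ swaps x₂,x₃. Then the braid relation holds: ∂₁∘∂₂∘∂₁ = ∂₂∘∂₁∘∂₂. -/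
/-!
Clearing denominators, `(x₁ - x₂)(x₂ - x₃)(x₁ - x₃) · ∂₁∂₂∂₁ f` is the alternating sum
`∑_{w ∈ S₃} sgn(w) w·f`: this only uses that `s₁` fixes `∂₁ f` and that `s₁s₂s₁ = (1 3)`.
Exchanging the roles of `x₁` and `x₃` turns `∂₁, ∂₂` into `-∂₂, -∂₁` and leaves the
alternating sum unchanged, so `∂₂∂₁∂₂ f` satisfies the same equation, and the Vandermonde
factor can be cancelled in the domain `ℚ[x₁, x₂, x₃]`.
-/

open MvPolynomial

/-- The automorphism of `ℚ[x₁,x₂,x₃]` swapping `x₁` and `x₂`. -/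
noncomputable def swap12 : MvPolynomial (Fin 3) ℚ →ₐ[ℚ] MvPolynomial (Fin 3) ℚ :=
  rename (Equiv.swap 0 1)

/-- The automorphism of `ℚ[x₁,x₂,x₃]` swapping `x₂` and `x₃`. -/
noncomputable def swap23 : MvPolynomial (Fin 3) ℚ →ₐ[ℚ] MvPolynomial (Fin 3) ℚ :=
  rename (Equiv.swap 1 2)

namespace MvPolynomial

open Equiv

variable {σ R : Type*} [DecidableEq σ]

section CommSemiring

variable [CommSemiring R]

theorem rename_swap_rename_swap (i j : σ) (p : MvPolynomial σ R) :
    rename (swap i j) (rename (swap i j) p) = p := by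
  rw [rename_rename, ← Perm.coe_mul, swap_mul_self, Perm.coe_one, rename_id_apply]

theorem rename_swap_rename_swap_rename_swap {i j k : σ} (hik : i ≠ k) (hjk : j ≠ k)
    (p : MvPolynomial σ R) :
    rename (swap i j) (rename (swap j k) (rename (swap i j) p)) = rename (swap i k) p := by
  rw [rename_rename, rename_rename, ← Perm.coe_mul, ← Perm.coe_mul,
    swap_comm i j, swap_comm j k, swap_mul_swap_mul_swap hjk.symm hik.symm]

end CommSemiring

variable [CommRing R]

/-- `a = (f - sᵢⱼ f) / (xᵢ - xⱼ)`, stated without division. -/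
def IsDivDiff (i j : σ) (f a : MvPolynomial σ R) : Prop :=
  (X i - X j) * a = f - rename (swap i j) f

omit [DecidableEq σ] in
theorem X_sub_X_ne_zero [IsDomain R] {i j : σ} (h : i ≠ j) :
    (X i - X j : MvPolynomial σ R) ≠ 0 :=
  sub_ne_zero.2 (X_injective.ne h)

variable {i j : σ} {f a : MvPolynomial σ R}

theorem IsDivDiff.symm (h : IsDivDiff i j f a) : IsDivDiff j i f (-a) := by
  rw [IsDivDiff, swap_comm, ← h]
  ring

theorem IsDivDiff.neg_symm (h : IsDivDiff i j f a) : IsDivDiff j i (-f) a := by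
  rw [IsDivDiff] at h ⊢
  rw [swap_comm, map_neg]
  linear_combination -h

theorem IsDivDiff.rename_swap_eq [IsDomain R] (h : IsDivDiff i j f a) (hij : i ≠ j) :
    rename (swap i j) a = a := by
  rw [IsDivDiff] at h
  have hs := congrArg (rename (swap i j)) h
  simp only [map_mul, map_sub, rename_X, swap_apply_left, swap_apply_right,
    rename_swap_rename_swap] at hs
  refine mul_left_cancel₀ (X_sub_X_ne_zero (R := R) hij) ?_
  linear_combination -hs - h

noncomputable def permAlternatingSum (i j k : σ) (f : MvPolynomial σ R) : MvPolynomial σ R :=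
  f - rename (swap i j) f - rename (swap j k) f + rename (swap i j) (rename (swap j k) f)
    + rename (swap j k) (rename (swap i j) f) - rename (swap i k) f

theorem permAlternatingSum_comm (i j k : σ) (f : MvPolynomial σ R) :
    permAlternatingSum k j i f = permAlternatingSum i j k f := by
  rw [permAlternatingSum, permAlternatingSum, swap_comm k j, swap_comm j i, swap_comm k i]
  ring

theorem IsDivDiff.vandermonde_mul_eq_permAlternatingSum [IsDomain R] {i j k : σ}
    (hij : i ≠ j) (hik : i ≠ k) (hjk : j ≠ k) {b c : MvPolynomial σ R}
    (ha : IsDivDiff i j f a) (hb : IsDivDiff j k a b) (hc : IsDivDiff i j b c) :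
    (X i - X j) * (X j - X k) * (X i - X k) * c = permAlternatingSum i j k f := by
  have hsa := ha.rename_swap_eq hij
  rw [IsDivDiff] at ha hb hc
  have htha := congrArg (rename (swap j k)) ha
  simp only [map_mul, map_sub, rename_X, swap_apply_of_ne_of_ne hij hik, swap_apply_left] at htha
  have hstha := congrArg (rename (swap i j)) htha
  simp only [map_mul, map_sub, rename_X, swap_apply_left,
    swap_apply_of_ne_of_ne hik.symm hjk.symm, rename_swap_rename_swap_rename_swap hik hjk] at hstha
  have hshb := congrArg (rename (swap i j)) hb
  simp only [map_mul, map_sub, rename_X, swap_apply_right,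
    swap_apply_of_ne_of_ne hik.symm hjk.symm, hsa] at hshb
  rw [permAlternatingSum]
  linear_combination (X j - X k) * (X i - X k) * hc + (X i - X k) * hb - (X j - X k) * hshb
    + ha - htha + hstha

end MvPolynomial

/-- Braid relation `∂₁∂₂∂₁ = ∂₂∂₁∂₂` for the Demazure operators
`∂₁(f) = (f − s₁f)/(x₁−x₂)` and `∂₂(f) = (f − s₂f)/(x₂−x₃)`, the divided
differences being specified implicitly by their defining equations. -/
theorem demazure_braid (f a b c d e g : MvPolynomial (Fin 3) ℚ)
    (ha : (X 0 - X 1) * a = f - swap12 f)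
    (hb : (X 1 - X 2) * b = a - swap23 a)
    (hc : (X 0 - X 1) * c = b - swap12 b)
    (hd : (X 1 - X 2) * d = f - swap23 f)
    (he : (X 0 - X 1) * e = d - swap12 d)
    (hg : (X 1 - X 2) * g = e - swap23 e) :
    c = g := by
  have hc' := IsDivDiff.vandermonde_mul_eq_permAlternatingSum (by decide) (by decide) (by decide)
    (ha : IsDivDiff 0 1 f a) (hb : IsDivDiff 1 2 a b) (hc : IsDivDiff 0 1 b c)
  have hg' := IsDivDiff.vandermonde_mul_eq_permAlternatingSum (by decide) (by decide) (by decide)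
    (IsDivDiff.symm (hd : IsDivDiff 1 2 f d))
    (IsDivDiff.neg_symm (he : IsDivDiff 0 1 d e))
    (IsDivDiff.symm (hg : IsDivDiff 1 2 e g))
  rw [permAlternatingSum_comm] at hg'
  have hΔ : (X 0 - X 1) * (X 1 - X 2) * (X 0 - X 2 : MvPolynomial (Fin 3) ℚ) ≠ 0 :=
    mul_ne_zero (mul_ne_zero (X_sub_X_ne_zero (by decide)) (X_sub_X_ne_zero (by decide)))
      (X_sub_X_ne_zero (by decide))
  exact mul_left_cancel₀ hΔ (by linear_combination hc' - hg')
end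

section
/- Let R = ℚ[x,y], R^s the symmetric subring, and B = R ⊗_{R^s} R. Then there is an isomorphism of (R,R)-bimodules B ⊗_R B ≅ B ⊕ B. (Categorified quadratic Hecke relation: b_i² = (q+q⁻¹)b_i; in the paper this corresponds to the one-color digon relations.) -/
set_option synthInstance.maxHeartbeats 1000000
set_option maxHeartbeats 1000000
open MvPolynomial TensorProduct

noncomputable abbrev SoergelR : Type := MvPolynomial (Fin 2) ℚ

noncomputable abbrev SoergelRs : Subalgebra ℚ SoergelR := symmetricSubalgebra (Fin 2) ℚ

/-- The Soergel bimodule `B = R ⊗_{R^s} R`. -/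
noncomputable abbrev SoergelB : Type := SoergelR ⊗[SoergelRs] SoergelR

/-!
`R = ℚ[x,y]` is free of rank two over `R^s`, with basis `1, x`. Writing `s` for the swap of
the variables, `x - y` divides `f - s f` with a symmetric quotient `h`, so `f = (f - h x) + h x`
with both coefficients symmetric; and `g + h x = 0` with `g, h` symmetric gives `g + h y = 0`,
hence `h = 0`. So `R ⊗_{R^s} R ≅ R ⊕ R` as left `R`-modules, and
`B ⊗_R B ≅ (R ⊗_{R^s} R) ⊗_{R^s} R ≅ (R ⊕ R) ⊗_{R^s} R ≅ B ⊕ B`. The last tensor factor is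
carried along untouched, so the isomorphism also respects the right `R`-action.
-/

section TensorProduct

variable {S R : Type*} [CommRing S] [CommRing R] [Algebra S R]

noncomputable def tensorEquivProdOfEquivProd {M : Type*} [AddCommGroup M] [Module S M]
    (e : M ≃ₗ[S] S × S) : R ⊗[S] M ≃ₗ[R] R × R :=
  AlgebraTensorModule.congr (LinearEquiv.refl R R) e ≪≫ₗ prodRight S R R S S ≪≫ₗ
    (AlgebraTensorModule.rid S R R).prodCongr (AlgebraTensorModule.rid S R R)

variable (ρ : R ≃ₗ[S] S × S)

noncomputable def tensorTensorEquivProd :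
    (R ⊗[S] R) ⊗[R] (R ⊗[S] R) ≃ₗ[R] (R ⊗[S] R) × (R ⊗[S] R) :=
  AlgebraTensorModule.cancelBaseChange S R R (R ⊗[S] R) R ≪≫ₗ
    AlgebraTensorModule.congr (tensorEquivProdOfEquivProd ρ) (LinearEquiv.refl S R) ≪≫ₗ
    prodLeft S R R R R

lemma tensorTensorEquivProd_tmul (u : R ⊗[S] R) (a b : R) :
    tensorTensorEquivProd ρ (u ⊗ₜ[R] (a ⊗ₜ[S] b)) =
      ((tensorEquivProdOfEquivProd ρ (a • u)).1 ⊗ₜ[S] b,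
        (tensorEquivProdOfEquivProd ρ (a • u)).2 ⊗ₜ[S] b) :=
  rfl

lemma tensorTensorEquivProd_mul_one_tmul_one_tmul
    (z : (R ⊗[S] R) ⊗[R] (R ⊗[S] R)) (r : R) :
    tensorTensorEquivProd ρ (z * ((1 : R ⊗[S] R) ⊗ₜ[R] ((1 : R) ⊗ₜ[S] r))) =
      tensorTensorEquivProd ρ z * ((1 : R) ⊗ₜ[S] r, (1 : R) ⊗ₜ[S] r) := by
  induction z using TensorProduct.induction_on with
  | zero => simp only [zero_mul, map_zero]
  | add x y hx hy => rw [add_mul, map_add, hx, hy, map_add, add_mul]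
  | tmul u v =>
    induction v using TensorProduct.induction_on with
    | zero => simp only [tmul_zero, zero_mul, map_zero]
    | add x y hx hy => rw [tmul_add, add_mul, map_add, hx, hy, map_add, add_mul]
    | tmul a b =>
      simp only [Algebra.TensorProduct.tmul_mul_tmul, mul_one, tensorTensorEquivProd_tmul,
        Prod.mk_mul_mk]

end TensorProduct

section SymmetricPolynomials

variable {K : Type*} [CommRing K]

noncomputable def swapVars : MvPolynomial (Fin 2) K →ₐ[K] MvPolynomial (Fin 2) K :=
  rename (Equiv.swap 0 1)

lemma swapVars_X (i : Fin 2) : swapVars (X i : MvPolynomial (Fin 2) K) = X (Equiv.swap 0 1 i) :=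
  rename_X _ _

lemma swapVars_swapVars (f : MvPolynomial (Fin 2) K) : swapVars (swapVars f) = f := by
  rw [swapVars, rename_rename, ← Equiv.Perm.coe_mul, Equiv.swap_mul_self, Equiv.Perm.coe_one,
    rename_id_apply]

lemma swapVars_X_zero_sub_X_one :
    swapVars (X 0 - X 1 : MvPolynomial (Fin 2) K) = -(X 0 - X 1) := by
  simp only [map_sub, swapVars_X, Equiv.swap_apply_left, Equiv.swap_apply_right, neg_sub]

lemma mem_symmetricSubalgebra_iff_swapVars {f : MvPolynomial (Fin 2) K} :
    f ∈ symmetricSubalgebra (Fin 2) K ↔ swapVars f = f := by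
  rw [mem_symmetricSubalgebra]
  refine ⟨fun h ↦ h _, fun h e ↦ ?_⟩
  obtain rfl | rfl : e = Equiv.refl _ ∨ e = Equiv.swap 0 1 := by revert e; decide
  · exact rename_id_apply f
  · exact h

lemma X_sub_X_dvd_sub_swapVars (f : MvPolynomial (Fin 2) K) :
    (X 0 - X 1 : MvPolynomial (Fin 2) K) ∣ f - swapVars f := by
  induction f using MvPolynomial.induction_on with
  | C a => simp [swapVars]
  | add p q hp hq => simpa only [map_add, add_sub_add_comm] using dvd_add hp hq
  | mul_X p i hp =>
    have hX : (X 0 - X 1 : MvPolynomial (Fin 2) K) ∣ X i - X (Equiv.swap 0 1 i) := by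
      fin_cases i
      · simp
      · exact dvd_sub_comm.mp dvd_rfl
    have : p * X i - swapVars (p * X i) =
        (p - swapVars p) * X i + swapVars p * (X i - X (Equiv.swap 0 1 i)) := by
      rw [map_mul, swapVars_X]; ring
    rw [this]
    exact dvd_add (hp.mul_right _) (hX.mul_left _)

local notation "Rˢ" => symmetricSubalgebra (Fin 2) K

noncomputable def ofSymmetricPair : Rˢ × Rˢ →ₗ[Rˢ] MvPolynomial (Fin 2) K where
  toFun p := (p.1 : MvPolynomial (Fin 2) K) + (p.2 : MvPolynomial (Fin 2) K) * X 0
  map_add' p q := by simp only [Prod.fst_add, Prod.snd_add, Subalgebra.coe_add]; ring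
  map_smul' s p := by
    simp only [Prod.smul_fst, Prod.smul_snd, smul_eq_mul, Subalgebra.coe_mul,
      RingHom.id_apply, Subalgebra.smul_def]
    ring

variable [IsDomain K]

lemma X_zero_sub_X_one_ne_zero : (X 0 - X 1 : MvPolynomial (Fin 2) K) ≠ 0 :=
  sub_ne_zero.mpr fun h ↦ absurd (X_injective h) (by decide)

lemma ofSymmetricPair_injective : Function.Injective (ofSymmetricPair (K := K)) := by
  refine (injective_iff_map_eq_zero _).mpr fun ⟨g, h⟩ hgh ↦ ?_
  have hg := mem_symmetricSubalgebra_iff_swapVars.mp g.2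
  have hh := mem_symmetricSubalgebra_iff_swapVars.mp h.2
  change (g : MvPolynomial (Fin 2) K) + (h : MvPolynomial (Fin 2) K) * X 0 = 0 at hgh
  have hgh' := congrArg swapVars hgh
  rw [map_add, map_mul, hg, hh, swapVars_X, Equiv.swap_apply_left, map_zero swapVars] at hgh'
  have h0 : (h : MvPolynomial (Fin 2) K) = 0 :=
    (mul_eq_zero.mp (by linear_combination hgh - hgh' :
      (X 0 - X 1) * (h : MvPolynomial (Fin 2) K) = 0)).resolve_left X_zero_sub_X_one_ne_zero
  have g0 : (g : MvPolynomial (Fin 2) K) = 0 := by simpa [h0] using hgh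
  ext <;> simp [g0, h0]

lemma ofSymmetricPair_surjective : Function.Surjective (ofSymmetricPair (K := K)) := by
  intro f
  obtain ⟨h, hf⟩ := X_sub_X_dvd_sub_swapVars f
  have hf' := congrArg swapVars hf
  rw [map_sub, map_mul, swapVars_swapVars, swapVars_X_zero_sub_X_one] at hf'
  have hh : swapVars h = h :=
    mul_left_cancel₀ X_zero_sub_X_one_ne_zero (by linear_combination hf' + hf)
  have hg : swapVars (f - h * X 0) = f - h * X 0 := by
    rw [map_sub, map_mul, hh, swapVars_X, Equiv.swap_apply_left]
    linear_combination -hf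
  exact ⟨(⟨_, mem_symmetricSubalgebra_iff_swapVars.mpr hg⟩,
    ⟨h, mem_symmetricSubalgebra_iff_swapVars.mpr hh⟩), sub_add_cancel f (h * X 0)⟩

noncomputable def symmetricPairEquiv : MvPolynomial (Fin 2) K ≃ₗ[Rˢ] Rˢ × Rˢ :=
  (LinearEquiv.ofBijective ofSymmetricPair
    ⟨ofSymmetricPair_injective, ofSymmetricPair_surjective⟩).symm

end SymmetricPolynomials

/-- Categorified quadratic Hecke relation: `B ⊗_R B ≅ B ⊕ B` as `(R,R)`-bimodules.
The left `R`-action is the module structure; the right `R`-action is encoded by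
multiplication with `1 ⊗ (1 ⊗ r)` on `B ⊗_R B` and with `1 ⊗ r` on each summand. -/
theorem soergel_bimodule_square :
    ∃ e : (SoergelB ⊗[SoergelR] SoergelB) ≃ₗ[SoergelR] SoergelB × SoergelB,
      ∀ (z : SoergelB ⊗[SoergelR] SoergelB) (r : SoergelR),
        e (z * ((1 : SoergelB) ⊗ₜ[SoergelR]
            ((1 : SoergelR) ⊗ₜ[SoergelRs] r)))
        = e z * ((1 : SoergelR) ⊗ₜ[SoergelRs] r,
                 (1 : SoergelR) ⊗ₜ[SoergelRs] r) :=
  ⟨tensorTensorEquivProd symmetricPairEquiv,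
    tensorTensorEquivProd_mul_one_tmul_one_tmul symmetricPairEquiv⟩
end
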